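/- Consider an irreducible family of k-planes in P^n such that the intersection of any two planes in the family has dimension exactly k−1. Then either all k-planes of the family are contained in a fixed (k+1)-dimensional linear subspace of P^n, or there is a fixed (k−1)-dimensional linear subspace of P^n contained in every k-plane of the family. -/
import Mathlib

open Module

/-- If `X` and `Y` are distinct `k`-dimensional subspaces of a `(k+1)`-dimensional
subspace `E`, then they span `E`. -/
private lemma aux_sup_eq {K V : Type*} [Field K] [AddCommGroup V] [Module K V]
    [FiniteDimensional K V] {X Y E : Submodule K V} {k : ℕ}
    (hX : X ≤ E) (hY : Y ≤ E) (hx : Module.finrank K X = k) (hy : Module.finrank K Y = k)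
    (he : Module.finrank K E = k + 1) (hne : X ≠ Y) : X ⊔ Y = E := by
  have hlt : X < X ⊔ Y := by
    refine lt_of_le_of_ne le_sup_left fun h => hne ?_
    have hYX : Y ≤ X := by rw [h]; exact le_sup_right
    exact (Submodule.eq_of_le_of_finrank_eq hYX (by rw [hx, hy])).symm
  have h1 : k < Module.finrank K (X ⊔ Y : Submodule K V) := by
    rw [← hx]; exact Submodule.finrank_lt_finrank_of_lt hlt
  have h2 : Module.finrank K (X ⊔ Y : Submodule K V) ≤ k + 1 := by
    rw [← he]; exact Submodule.finrank_mono (sup_le hX hY)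
  exact Submodule.eq_of_le_of_finrank_eq (sup_le hX hY) (by omega)

/-- Any finite-dimensional space of dimension `k+1` contains a subspace of dimension `k`. -/
private lemma aux_exists_sub {K V : Type*} [Field K] [AddCommGroup V] [Module K V]
    [FiniteDimensional K V] (E : Submodule K V) {k : ℕ} (he : Module.finrank K E = k + 1) :
    ∃ W : Submodule K V, Module.finrank K W = k ∧ W ≤ E := by
  let b : Basis (Fin (k + 1)) K E := Module.finBasisOfFinrankEq K E he
  let f : Fin k → E := b ∘ Fin.castSucc
  have hli : LinearIndependent K f :=
    b.linearIndependent.comp Fin.castSucc (Fin.castSucc_injective k)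
  refine ⟨(Submodule.span K (Set.range f)).map E.subtype, ?_, Submodule.map_subtype_le _ _⟩
  have h1 : Module.finrank K (Submodule.span K (Set.range f)) = k := by
    rw [finrank_span_eq_card hli, Fintype.card_fin]
  have h2 := (Submodule.equivMapOfInjective E.subtype (Submodule.injective_subtype E)
    (Submodule.span K (Set.range f))).finrank_eq
  rw [← h2, h1]

/-- A `k`-plane in `ℙⁿ` is a linear subspace of projective dimension `k`,
i.e. a `(k+1)`-dimensional linear subspace of `K^{n+1}`.  An irreducible family of `k`-planes
is given by an irreducible variety `T` (here: an irreducible topological space) mapping to the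
Grassmannian, `φ : T → Submodule K (Fin (n+1) → K)`.  If any two members of the family meet in
projective dimension exactly `k − 1` (linear dimension `k`), then either all members are
contained in a fixed `(k+1)`-plane (linear dimension `k+2`) or a fixed `(k−1)`-plane (linear
dimension `k`) is contained in every member. -/
theorem stmt2 (k n : ℕ) (K : Type*) [Field K]
    (T : Type*) [TopologicalSpace T] [IrreducibleSpace T]
    (φ : T → Submodule K (Fin (n + 1) → K))
    (hdim : ∀ t, Module.finrank K (φ t) = k + 1)
    (hint : ∀ s t : T, s ≠ t →
      Module.finrank K ((φ s ⊓ φ t : Submodule K (Fin (n + 1) → K)) : Submodule K (Fin (n + 1) → K)) = k) :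
    (∃ W : Submodule K (Fin (n + 1) → K), Module.finrank K W = k + 2 ∧ ∀ t, φ t ≤ W) ∨
    (∃ W : Submodule K (Fin (n + 1) → K), Module.finrank K W = k ∧ ∀ t, W ≤ φ t) := by
  classical
  -- φ is injective
  have hinj : ∀ s t : T, φ s = φ t → s = t := by
    intro s t h
    by_contra hne
    have h1 := hint s t hne
    rw [h, inf_idem] at h1
    rw [hdim t] at h1
    omega
  by_cases h1 : ∀ u v : T, φ u = φ v
  · -- all planes equal: take any k-dimensional subspace
    have t0 : T := Classical.arbitrary T
    obtain ⟨W, hW, hWle⟩ := aux_exists_sub (φ t0) (hdim t0)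
    exact Or.inr ⟨W, hW, fun u => (h1 t0 u) ▸ hWle⟩
  · push_neg at h1
    obtain ⟨s, t, hst⟩ := h1
    have hst' : s ≠ t := fun h => hst (h ▸ rfl)
    set D : Submodule K (Fin (n + 1) → K) := φ s ⊓ φ t with hDdef
    set S : Submodule K (Fin (n + 1) → K) := φ s ⊔ φ t with hSdef
    have hD : Module.finrank K D = k := hint s t hst'
    have hS : Module.finrank K S = k + 2 := by
      have := Submodule.finrank_sup_add_finrank_inf_eq (φ s) (φ t)
      rw [hdim s, hdim t] at this
      rw [← hDdef, ← hSdef, hD] at this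
      omega
    by_cases h2 : ∀ u : T, D ≤ φ u
    · exact Or.inr ⟨D, hD, h2⟩
    · push_neg at h2
      obtain ⟨u, hu⟩ := h2
      -- key: any plane not containing D lies in S
      have key : ∀ e : T, ¬ D ≤ φ e → φ e ≤ S := by
        intro e he
        have hes : e ≠ s := fun h => he (h ▸ inf_le_left)
        have het : e ≠ t := fun h => he (h ▸ inf_le_right)
        have hA : Module.finrank K ((φ e ⊓ φ s : Submodule K (Fin (n + 1) → K))) = k :=
          hint e s hes
        have hB : Module.finrank K ((φ e ⊓ φ t : Submodule K (Fin (n + 1) → K))) = k :=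
          hint e t het
        have hne : (φ e ⊓ φ s : Submodule K (Fin (n + 1) → K)) ≠ φ e ⊓ φ t := by
          intro h
          apply he
          have hle : (φ e ⊓ φ s : Submodule K (Fin (n + 1) → K)) ≤ D :=
            le_inf inf_le_right (h ▸ inf_le_right)
          have : (φ e ⊓ φ s : Submodule K (Fin (n + 1) → K)) = D :=
            Submodule.eq_of_le_of_finrank_eq hle (by rw [hA, hD])
          exact this ▸ inf_le_left
        have hsup := aux_sup_eq (X := φ e ⊓ φ s) (Y := φ e ⊓ φ t) (E := φ e)
          inf_le_left inf_le_left hA hB (hdim e) hne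
        calc φ e = (φ e ⊓ φ s) ⊔ (φ e ⊓ φ t) := hsup.symm
          _ ≤ S := sup_le (le_trans inf_le_right le_sup_left)
              (le_trans inf_le_right le_sup_right)
      refine Or.inl ⟨S, hS, fun e => ?_⟩
      by_cases hDe : D ≤ φ e
      · have heu : e ≠ u := fun h => hu (h ▸ hDe)
        have hA : Module.finrank K ((φ e ⊓ φ u : Submodule K (Fin (n + 1) → K))) = k :=
          hint e u heu
        have hne : D ≠ (φ e ⊓ φ u : Submodule K (Fin (n + 1) → K)) := by
          intro h
          exact hu (h ▸ inf_le_right)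
        have hsup := aux_sup_eq (X := D) (Y := φ e ⊓ φ u) (E := φ e)
          hDe inf_le_left hD hA (hdim e) hne
        calc φ e = D ⊔ (φ e ⊓ φ u) := hsup.symm
          _ ≤ S := sup_le (le_trans inf_le_left le_sup_left)
              (le_trans inf_le_right (key u hu))
      · exact key e hDe
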